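/- arXiv:1708.09109 — 6 statements merged into one kernel-verified Lean document; each statement's English description precedes it below -/
import Mathlib

section
/- Let 0 < q < 1, let n ≥ 2 and k ≥ 0 be integers, and let f(x_1,…,x_{n−1}) be a polynomial that is homogeneous of degree d, i.e., f(t x_1,…,t x_{n−1}) = t^d f(x_1,…,x_{n−1}). Then ∫_{0≤x_1≤⋯≤x_n≤1} f(x_1,…,x_{n−1}) x_n^k d_q x_1 ⋯ d_q x_n = ((1−q)/(1 − q^{n+k+d})) · ∫_{0≤x_1≤⋯≤x_{n−1}≤1} f(x_1,…,x_{n−1}) d_q x_1 ⋯ d_q x_{n−1}. -/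
/-!
A partition `μ` with `m + 1` parts is uniquely `μ = (ν₁ + c, …, νₘ + c, c)` with `c = μₘ₊₁` and
`ν` a partition with `m` parts. In these coordinates `q^{|μ|} = q^{(m+1)c} q^{|ν|}`,
`x_{m+1}^k = q^{ck}`, and homogeneity turns `f(q^{μ₁},…,q^{μₘ})` into `q^{cd} f(q^ν)`. So the
`(m+1)`-fold sum factors into the geometric series in `q^{m+1+k+d}` times the `m`-fold sum.
-/

/-- The `q`-integral over the simplex `0 ≤ x_1 ≤ ⋯ ≤ x_n ≤ 1`:
`∫ f d_q x = (1-q)^n ∑_{μ ∈ Par_n} q^{|μ|} f(q^{μ_1},…,q^{μ_n})`,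
the sum over all partitions `μ` with at most `n` parts. -/
noncomputable def qint (q : ℝ) (n : ℕ) (f : (Fin n → ℝ) → ℝ) : ℝ :=
  (1 - q) ^ n *
    ∑' μ : {μ : Fin n → ℕ // Antitone μ}, q ^ (∑ i, μ.1 i) * f (fun i => q ^ (μ.1 i))

/-- The alternant `a_λ(x_1,…,x_n) = det(x_i^{λ_j})`. -/
noncomputable def alt (n : ℕ) (lam : Fin n → ℕ) (x : Fin n → ℝ) : ℝ :=
  Matrix.det (Matrix.of fun i j : Fin n => x i ^ lam j)

/-- `λ + δ_n`, where `δ_n = (n-1, n-2, …, 1, 0)` is the staircase. -/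
def stair (n : ℕ) (lam : Fin n → ℕ) : Fin n → ℕ :=
  fun j => lam j + (n - 1 - (j : ℕ))

/-- q-Pochhammer symbol `(a;q)_m = ∏_{i=0}^{m-1} (1 - a q^i)`. -/
noncomputable def qpoch (a q : ℝ) (m : ℕ) : ℝ :=
  ∏ i ∈ Finset.range m, (1 - a * q ^ i)

/-- Parts of a partition `μ ∈ Par_n`, extended by `0` beyond index `n`
(`padF μ t` is the part `μ_{t+1}` in 1-based labelling). -/
def padF {n : ℕ} (μ : Fin n → ℕ) : ℕ → ℕ := fun t => if h : t < n then μ ⟨t, h⟩ else 0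

abbrev Par (m : ℕ) := {μ : Fin m → ℕ // Antitone μ}

lemma summable_pow_sum {q : ℝ} (hq0 : 0 ≤ q) (hq1 : q < 1) :
    ∀ m : ℕ, Summable fun ν : Fin m → ℕ => q ^ ∑ i, ν i
  | 0 => .of_finite
  | m + 1 => by
    have h := (summable_geometric_of_lt_one hq0 hq1).mul_of_nonneg (summable_pow_sum hq0 hq1 m)
      (fun _ => pow_nonneg hq0 _) (fun _ => pow_nonneg hq0 _)
    refine (h.comp_injective (Fin.consEquiv fun _ => ℕ).symm.injective).congr fun ν => ?_
    simp [Fin.sum_univ_succ, pow_add, Fin.tail]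

lemma summable_norm_pow_sum_mul {q : ℝ} (hq0 : 0 ≤ q) (hq1 : q < 1) {m : ℕ}
    {g : (Fin m → ℝ) → ℝ} (hg : ContinuousOn g (Set.Icc 0 1)) :
    Summable fun μ : Par m => ‖q ^ (∑ i, μ.1 i) * g fun i => q ^ μ.1 i‖ := by
  obtain ⟨C, hC⟩ := isCompact_Icc.exists_bound_of_continuousOn hg
  have hmem (ν : Fin m → ℕ) : (fun i => q ^ ν i) ∈ Set.Icc (0 : Fin m → ℝ) 1 :=
    ⟨fun i => pow_nonneg hq0 _, fun i => pow_le_one₀ hq0 hq1.le⟩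
  have hbound (ν : Fin m → ℕ) : ‖q ^ (∑ i, ν i) * g fun i => q ^ ν i‖ ≤ q ^ (∑ i, ν i) * C := by
    rw [norm_mul, Real.norm_of_nonneg (pow_nonneg hq0 _)]
    exact mul_le_mul_of_nonneg_left (hC _ (hmem ν)) (pow_nonneg hq0 _)
  exact (Summable.of_nonneg_of_le (fun _ => norm_nonneg _) hbound
    ((summable_pow_sum hq0 hq1 m).mul_right C)).subtype _

lemma antitone_snoc_add {m : ℕ} {ν : Fin m → ℕ} (hν : Antitone ν) (c : ℕ) :
    Antitone (Fin.snoc (α := fun _ => ℕ) (fun i => ν i + c) c) := by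
  intro i j hij
  induction j using Fin.lastCases with
  | last => induction i using Fin.lastCases <;> simp
  | cast j =>
    induction i using Fin.lastCases with
    | last => exact absurd hij (not_le.2 (Fin.castSucc_lt_last j))
    | cast i => simpa using hν (Fin.castSucc_le_castSucc_iff.1 hij)

def parSnocEquiv (m : ℕ) : ℕ × Par m ≃ Par (m + 1) where
  toFun p := ⟨Fin.snoc (fun i => p.2.1 i + p.1) p.1, antitone_snoc_add p.2.2 p.1⟩
  invFun μ := (μ.1 (Fin.last m),
    ⟨fun i => μ.1 i.castSucc - μ.1 (Fin.last m), fun _ _ hij =>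
      Nat.sub_le_sub_right (μ.2 (Fin.castSucc_le_castSucc_iff.2 hij)) _⟩)
  left_inv p := by ext <;> simp
  right_inv μ := by
    ext i
    induction i using Fin.lastCases with
    | last => simp
    | cast i => simpa using Nat.sub_add_cancel (μ.2 (Fin.le_last i.castSucc))

lemma parSnocEquiv_apply_castSucc (m : ℕ) (p : ℕ × Par m) (i : Fin m) :
    (parSnocEquiv m p).1 i.castSucc = p.2.1 i + p.1 := by
  simp [parSnocEquiv]

lemma parSnocEquiv_apply_last (m : ℕ) (p : ℕ × Par m) :
    (parSnocEquiv m p).1 (Fin.last m) = p.1 := by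
  simp [parSnocEquiv]

lemma sum_parSnocEquiv (m : ℕ) (p : ℕ × Par m) :
    ∑ i, (parSnocEquiv m p).1 i = ∑ i, p.2.1 i + (m + 1) * p.1 := by
  simp [Fin.sum_univ_castSucc, parSnocEquiv_apply_castSucc, parSnocEquiv_apply_last,
    Finset.sum_add_distrib]
  ring

theorem qint_mul_last_pow_of_homogeneous {q : ℝ} (hq0 : 0 ≤ q) (hq1 : q < 1) (m k d : ℕ)
    {g : (Fin m → ℝ) → ℝ} (hg : ContinuousOn g (Set.Icc 0 1))
    (hhom : ∀ (t : ℝ) (x : Fin m → ℝ), g (fun i => t * x i) = t ^ d * g x) :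
    qint q (m + 1) (fun x => g (fun i => x i.castSucc) * x (Fin.last m) ^ k)
      = (1 - q) / (1 - q ^ (m + 1 + k + d)) * qint q m g := by
  set r := q ^ (m + 1 + k + d)
  have hr0 : 0 ≤ r := pow_nonneg hq0 _
  have hr1 : r < 1 := pow_lt_one₀ hq0 hq1 (by omega)
  set B : Par m → ℝ := fun ν => q ^ (∑ i, ν.1 i) * g fun i => q ^ ν.1 i
  have hsummand (p : ℕ × Par m) :
      q ^ (∑ i, (parSnocEquiv m p).1 i) * (g (fun i => q ^ (parSnocEquiv m p).1 i.castSucc)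
        * (q ^ (parSnocEquiv m p).1 (Fin.last m)) ^ k) = r ^ p.1 * B p.2 := by
    simp only [sum_parSnocEquiv, parSnocEquiv_apply_castSucc, parSnocEquiv_apply_last, pow_add,
      mul_comm _ (q ^ p.1), hhom, B, r]
    ring
  have hgeom : Summable fun c : ℕ => ‖r ^ c‖ := by
    simpa [Real.norm_of_nonneg (pow_nonneg hr0 _)] using summable_geometric_of_lt_one hr0 hr1
  unfold qint
  rw [← (parSnocEquiv m).tsum_eq, tsum_congr hsummand, ← tsum_mul_tsum_of_summable_norm hgeom
    (summable_norm_pow_sum_mul hq0 hq1 hg), tsum_geometric_of_lt_one hr0 hr1]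
  field_simp
  ring

theorem stmt4 (q : ℝ) (hq0 : 0 < q) (hq1 : q < 1) (n k d : ℕ) (hn : 2 ≤ n)
    (f : MvPolynomial (Fin (n - 1)) ℝ)
    (hf : ∀ (t : ℝ) (x : Fin (n - 1) → ℝ),
      MvPolynomial.eval (fun i => t * x i) f = t ^ d * MvPolynomial.eval x f) :
    qint q n (fun x =>
        MvPolynomial.eval (fun i : Fin (n - 1) => x (Fin.castLE (by omega) i)) f
          * x ⟨n - 1, by omega⟩ ^ k)
      = (1 - q) / (1 - q ^ (n + k + d))
          * qint q (n - 1) (fun x => MvPolynomial.eval x f) := by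
  obtain ⟨m, rfl⟩ : ∃ m, n = m + 1 := ⟨n - 1, by omega⟩
  exact qint_mul_last_pow_of_homogeneous hq0.le hq1 m k d
    (MvPolynomial.continuous_eval f).continuousOn hf
end

section
/- Let a_1, …, a_n be pairwise distinct nonzero complex numbers. Then a_1 ⋯ a_n (1 − a_1 ⋯ a_n) = ∑_{ℓ=1}^n a_ℓ (1 − a_ℓ) ∏_{i=1, i≠ℓ}^n (1 − a_i a_ℓ)/(1 − a_ℓ/a_i). -/
/-!
With `A = ∏ aᵢ`, the identity `(1 - aᵢ aₗ) / (1 - aₗ / aᵢ) = aᵢ (aᵢ aₗ - 1) / (aₗ - aᵢ)` turns the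
right-hand side into `A · ∑ₗ (1 - aₗ) ∏_{i ≠ ℓ} (aᵢ aₗ - 1) / ∏_{i ≠ ℓ} (aₗ - aᵢ)`, a Lagrange sum
`∑ₓ f(x) / ∏_{y ≠ x} (x - y)`, which computes the top coefficient of `f` when `deg f` is less than
the number of nodes. For `P(x) = ∏ᵢ (aᵢ x - 1)` one has `P(aₗ) = (aₗ² - 1) ∏_{i ≠ ℓ} (aᵢ aₗ - 1)`,
so the `ℓ`-th summand is `-P(aₗ) / ((aₗ + 1) ∏_{i ≠ ℓ} (aₗ - aᵢ))`. If no `aᵢ` is `-1`, adjoin `-1`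
as a node: it contributes `1`, and the top coefficient of `P` is `A`. If `a_{ℓ₀} = -1`, use
`P / (X + 1) = ∏_{i ≠ ℓ₀} (aᵢ X - 1)` on the original nodes instead: its top coefficient is `-A`,
and at the node `a_{ℓ₀}` it contributes `1` while the summand there is `2`.
-/

open Polynomial Finset

section
variable {R ι : Type*} [CommRing R] (s : Finset ι) (a : ι → R)

theorem natDegree_C_mul_X_sub_one_le (r : R) : (C r * X - 1).natDegree ≤ 1 := by
  compute_degree

theorem natDegree_prod_C_mul_X_sub_one_le : (∏ i ∈ s, (C (a i) * X - 1)).natDegree ≤ #s := by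
  refine (natDegree_prod_le _ _).trans ?_
  simpa using sum_le_card_nsmul s _ 1 fun i _ => natDegree_C_mul_X_sub_one_le (a i)

theorem coeff_prod_C_mul_X_sub_one_card : (∏ i ∈ s, (C (a i) * X - 1)).coeff #s = ∏ i ∈ s, a i := by
  simpa [coeff_one] using coeff_prod_of_natDegree_le s (fun i => C (a i) * X - 1) 1
    fun i _ => natDegree_C_mul_X_sub_one_le (a i)

theorem eval_prod_C_mul_X_sub_one (x : R) :
    (∏ i ∈ s, (C (a i) * X - 1)).eval x = ∏ i ∈ s, (a i * x - 1) := by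
  simp [eval_prod]

end

namespace Lagrange

theorem coeff_card_eq_eval_div_prod_add_sum {F ι : Type*} [Field F] [DecidableEq ι]
    {s : Finset ι} {v : ι → F} (hv : Set.InjOn v s) {c : F} (hc : ∀ i ∈ s, v i ≠ c)
    {P : F[X]} (hP : P.degree ≤ #s) :
    P.coeff #s = P.eval c / ∏ i ∈ s, (c - v i)
      + ∑ i ∈ s, P.eval (v i) / ((v i - c) * ∏ j ∈ s.erase i, (v i - v j)) := by
  let w : Option ι → F := fun o => o.elim c v
  have hw : Set.InjOn w s.insertNone := by
    rintro (_ | i) hi (_ | j) hj hij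
    · rfl
    · exact absurd hij.symm (hc j (by simpa using hj))
    · exact absurd hij (hc i (by simpa using hi))
    · simpa using hv (by simpa using hi) (by simpa using hj) hij
  have hcard : #s.insertNone = #s + 1 := card_insertNone s
  have key := coeff_eq_sum hw (P := P) (by
    rw [hcard]; push_cast; exact hP.trans_lt (WithBot.coe_lt_coe.mpr (Nat.lt_succ_self _)))
  have h_none : s.insertNone.erase none = s.map Function.Embedding.some := by
    ext (_ | j) <;> simp
  have h_some (i : ι) : s.insertNone.erase (some i) = (s.erase i).insertNone := by
    ext (_ | j) <;> simp
  simpa [hcard, prod_insertNone, h_none, h_some, w] using key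

end Lagrange

section
variable {F ι : Type*} [Field F] [Fintype ι] [DecidableEq ι] {a : ι → F}

theorem prod_erase_sub_ne_zero (ha : Function.Injective a) (ℓ : ι) :
    ∏ i ∈ univ.erase ℓ, (a ℓ - a i) ≠ 0 :=
  prod_ne_zero_iff.mpr fun _ hi => sub_ne_zero.mpr (ha.ne (ne_of_mem_erase hi).symm)

theorem sum_one_sub_mul_prod_div_prod_of_ne_neg_one (ha : Function.Injective a)
    (h : ∀ i, a i ≠ -1) :
    ∑ ℓ, (1 - a ℓ) * (∏ i ∈ univ.erase ℓ, (a i * a ℓ - 1)) / ∏ i ∈ univ.erase ℓ, (a ℓ - a i)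
      = 1 - ∏ i, a i := by
  set P : F[X] := ∏ i, (C (a i) * X - 1)
  have key := Lagrange.coeff_card_eq_eval_div_prod_add_sum ha.injOn (fun i _ => h i) (P := P)
    (degree_le_of_natDegree_le (natDegree_prod_C_mul_X_sub_one_le _ _))
  have h_neg_one : P.eval (-1) / ∏ i, (-1 - a i) = 1 := by
    rw [eval_prod_C_mul_X_sub_one, prod_congr rfl fun i _ => show a i * -1 - 1 = -1 - a i by ring]
    exact div_self (prod_ne_zero_iff.mpr fun i _ => sub_ne_zero.mpr (h i).symm)
  have h_term (ℓ : ι) : P.eval (a ℓ) / ((a ℓ - -1) * ∏ i ∈ univ.erase ℓ, (a ℓ - a i))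
      = -((1 - a ℓ) * (∏ i ∈ univ.erase ℓ, (a i * a ℓ - 1)) / ∏ i ∈ univ.erase ℓ, (a ℓ - a i)) := by
    have hℓ : a ℓ + 1 ≠ 0 := fun h' => h ℓ (eq_neg_of_add_eq_zero_left h')
    rw [eval_prod_C_mul_X_sub_one, ← mul_prod_erase univ _ (mem_univ ℓ), sub_neg_eq_add,
      show a ℓ * a ℓ - 1 = (a ℓ + 1) * (a ℓ - 1) by ring, mul_assoc, mul_div_mul_left _ _ hℓ]
    ring
  rw [coeff_prod_C_mul_X_sub_one_card, h_neg_one, sum_congr rfl fun ℓ _ => h_term ℓ,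
    sum_neg_distrib] at key
  linear_combination key

theorem sum_one_sub_mul_prod_div_prod_of_eq_neg_one (ha : Function.Injective a) {ℓ₀ : ι}
    (h : a ℓ₀ = -1) :
    ∑ ℓ, (1 - a ℓ) * (∏ i ∈ univ.erase ℓ, (a i * a ℓ - 1)) / ∏ i ∈ univ.erase ℓ, (a ℓ - a i)
      = 1 - ∏ i, a i := by
  set Q : F[X] := ∏ i ∈ univ.erase ℓ₀, (C (a i) * X - 1)
  have hcard : #(univ.erase ℓ₀) = #(univ : Finset ι) - 1 := card_erase_of_mem (mem_univ ℓ₀)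
  have key := Lagrange.coeff_eq_sum ha.injOn (s := univ) (P := Q) <| by
    refine (degree_le_of_natDegree_le (natDegree_prod_C_mul_X_sub_one_le _ _)).trans_lt ?_
    rw [hcard, Nat.cast_lt]
    exact Nat.sub_lt (card_pos.mpr ⟨ℓ₀, mem_univ _⟩) one_pos
  have h_term (ℓ : ι) :
      (1 - a ℓ) * (∏ i ∈ univ.erase ℓ, (a i * a ℓ - 1)) / ∏ i ∈ univ.erase ℓ, (a ℓ - a i)
        = Q.eval (a ℓ) / ∏ i ∈ univ.erase ℓ, (a ℓ - a i) + if ℓ = ℓ₀ then 1 else 0 := by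
    rw [eval_prod_C_mul_X_sub_one]
    split_ifs with hℓ
    · subst hℓ
      have hD : ∏ i ∈ univ.erase ℓ, (a i * a ℓ - 1) = ∏ i ∈ univ.erase ℓ, (a ℓ - a i) :=
        prod_congr rfl fun i _ => by rw [h]; ring
      rw [hD, mul_div_assoc, div_self (prod_erase_sub_ne_zero ha ℓ), h]
      ring
    · rw [← mul_prod_erase _ _ (mem_erase.mpr ⟨Ne.symm hℓ, mem_univ ℓ₀⟩),
        ← mul_prod_erase _ _ (mem_erase.mpr ⟨hℓ, mem_univ ℓ⟩), erase_right_comm, h]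
      ring
  rw [sum_congr rfl fun ℓ _ => h_term ℓ, sum_add_distrib, ← key, ← hcard,
    coeff_prod_C_mul_X_sub_one_card, sum_ite_eq', if_pos (mem_univ _),
    ← mul_prod_erase univ a (mem_univ ℓ₀), h]
  ring

theorem sum_one_sub_mul_prod_div_prod (ha : Function.Injective a) :
    ∑ ℓ, (1 - a ℓ) * (∏ i ∈ univ.erase ℓ, (a i * a ℓ - 1)) / ∏ i ∈ univ.erase ℓ, (a ℓ - a i)
      = 1 - ∏ i, a i := by
  by_cases h : ∃ ℓ₀, a ℓ₀ = -1
  · obtain ⟨ℓ₀, h⟩ := h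
    exact sum_one_sub_mul_prod_div_prod_of_eq_neg_one ha h
  · push Not at h
    exact sum_one_sub_mul_prod_div_prod_of_ne_neg_one ha h

end

theorem one_sub_mul_div_one_sub_div {F : Type*} [Field F] {x : F} (hx : x ≠ 0) (y : F) :
    (1 - x * y) / (1 - y / x) = x * (x * y - 1) / (y - x) := by
  rw [one_sub_div hx, div_div_eq_mul_div, ← neg_sub y x, div_neg, ← neg_div]
  ring

theorem mul_one_sub_mul_prod_div_one_sub_div {F ι : Type*} [Field F] [Fintype ι] [DecidableEq ι]
    {a : ι → F} (h0 : ∀ i, a i ≠ 0) (ℓ : ι) :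
    a ℓ * (1 - a ℓ) * ∏ i ∈ univ.erase ℓ, (1 - a i * a ℓ) / (1 - a ℓ / a i)
      = (∏ i, a i) * ((1 - a ℓ) * (∏ i ∈ univ.erase ℓ, (a i * a ℓ - 1))
          / ∏ i ∈ univ.erase ℓ, (a ℓ - a i)) := by
  simp_rw [one_sub_mul_div_one_sub_div (h0 _), prod_div_distrib, prod_mul_distrib,
    ← mul_prod_erase univ a (mem_univ ℓ)]
  ring

theorem stmt7 (n : ℕ) (a : Fin n → ℂ) (h0 : ∀ i, a i ≠ 0)
    (hd : ∀ i j, i ≠ j → a i ≠ a j) :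
    (∏ i, a i) * (1 - ∏ i, a i)
      = ∑ ℓ : Fin n, a ℓ * (1 - a ℓ)
          * ∏ i ∈ Finset.univ.erase ℓ, (1 - a i * a ℓ) / (1 - a ℓ / a i) := by
  have ha : Function.Injective a := fun i j hij => by_contra fun hne => hd i j hne hij
  simp_rw [mul_one_sub_mul_prod_div_one_sub_div h0, ← mul_sum, sum_one_sub_mul_prod_div_prod ha]
end

section
/- Let 0 < q < 1, let n ≥ 1, and let λ, μ ∈ Par_n be partitions. Then ∫_{0≤x_1≤⋯≤x_n≤1} a_{λ+δ_n}(x_1,…,x_n) a_{μ+δ_n}(x_1,…,x_n) d_q x_1 ⋯ d_q x_n = q^{C(n,2)+2C(n,3)+∑_{i=1}^{n−1} i(λ_{i+1}+μ_{i+1})} (1−q)^n · ∏_{1≤i<j≤n}(1 − q^{λ_i−λ_j+j−i})(1 − q^{μ_i−μ_j+j−i}) / ∏_{i=1}^n ∏_{j=1}^n (1 − q^{λ_i+μ_j+2n−i−j+1}), where C(a,b) denotes a binomial coefficient. -/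
/-!
Write the `q`-integral as a sum over partitions `ν`, absorb the weight `q^{|ν|}` into the first
alternant and transpose both: the summand becomes `det (x_i ^ ν_j) * det (y_i ^ ν_j)` with
`x_i = q ^ ((λ + δ_n)_i + 1)` and `y_i = q ^ (μ + δ_n)_i`. It is symmetric in `ν` and vanishes
unless the `ν_j` are distinct, so the sum over partitions is `1/n!` times the sum over all of
`ℕ^n`. The discrete Andréief identity and the geometric series turn the latter into
`n! * det ((1 - x_i y_j)⁻¹)`, and Cauchy's determinant evaluates this as
`V(x) V(y) / ∏ (1 - x_i y_j)`; the rest is bookkeeping of the exponents of `q`.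
-/

open Finset Matrix

theorem sum_range_mul_two_mul_sub_add_one (n : ℕ) :
    ∑ j ∈ range n, j * (2 * (n - 1 - j) + 1) = n.choose 2 + 2 * n.choose 3 := by
  induction n with
  | zero => simp
  | succ n ih =>
    have hshift : ∑ j ∈ range n, j * (2 * (n + 1 - 1 - j) + 1)
        = ∑ j ∈ range n, j * (2 * (n - 1 - j) + 1) + 2 * ∑ j ∈ range n, j := by
      rw [mul_sum, ← sum_add_distrib]
      refine sum_congr rfl fun j hj => ?_
      rw [show n + 1 - 1 - j = n - 1 - j + 1 by have := mem_range.1 hj; omega]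
      ring
    have hgauss : ∑ j ∈ range n, j = n.choose 2 := by
      rw [sum_range_id, Nat.choose_two_right]
    rw [sum_range_succ, hshift, ih, hgauss, Nat.choose_succ_succ' n 2, Nat.choose_succ_succ' n 1,
      Nat.choose_one_right, show n + 1 - 1 - n = 0 by omega]
    ring

theorem Equiv.Perm.intCast_sign_mul_self {R ι : Type*} [Ring R] [DecidableEq ι] [Fintype ι]
    (π : Equiv.Perm ι) : ((Equiv.Perm.sign π : ℤ) : R) * (Equiv.Perm.sign π : ℤ) = 1 := by
  rw [← Int.cast_mul, ← Units.val_mul, Int.units_mul_self, Units.val_one, Int.cast_one]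

theorem Finset.prod_prod_Ioi_eq_prod_pow {M : Type*} [CommMonoid M] {n : ℕ} (f : Fin n → M) :
    ∏ i, ∏ j ∈ Ioi i, f j = ∏ j, f j ^ (j : ℕ) := by
  rw [prod_comm' (t' := univ) (s' := Iio) (by simp)]
  simp [prod_const, Fin.card_Iio]

section Cauchy

open Polynomial

variable {K : Type*} [Field K] {n : ℕ}

/- Clearing the denominators of row `i` of `((1 - x_i y_j)⁻¹)` leaves `(P_j(x_i))` with
`P_j = ∏_{k ≠ j} (1 - y_k X)` of degree `< n`, i.e. `V(x)` times the coefficient matrix of the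
`P_j`. At `x = 1/y` that product is diagonal, which computes the coefficient determinant. -/
noncomputable def cauchyPoly (y : Fin n → K) (j : Fin n) : K[X] :=
  ∏ k ∈ {j}ᶜ, (1 - C (y k) * X)

theorem eval_cauchyPoly (y : Fin n → K) (j : Fin n) (t : K) :
    (cauchyPoly y j).eval t = ∏ k ∈ {j}ᶜ, (1 - y k * t) := by
  simp [cauchyPoly, eval_prod]

theorem natDegree_cauchyPoly_lt (y : Fin n → K) (j : Fin n) : (cauchyPoly y j).natDegree < n := by
  have hlin (k : Fin n) : (1 - C (y k) * X).natDegree ≤ 1 := by compute_degree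
  refine (natDegree_prod_le _ _).trans_lt ((sum_le_sum fun k _ => hlin k).trans_lt ?_)
  rw [sum_const, card_compl, card_singleton, Fintype.card_fin, smul_eq_mul, mul_one]
  exact Nat.sub_lt (Fin.pos j) one_pos

theorem of_eval_eq_vandermonde_mul_of_coeff (v : Fin n → K) (p : Fin n → K[X])
    (hp : ∀ j, (p j).natDegree < n) :
    of (fun i j => (p j).eval (v i)) = vandermonde v * of fun (m : Fin n) j => (p j).coeff m := by
  ext i j
  rw [of_apply, eval_eq_sum_range' (hp j), ← Fin.sum_univ_eq_sum_range, mul_apply]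
  exact sum_congr rfl fun m _ => by simp [mul_comm]

theorem det_of_coeff_cauchyPoly {y : Fin n → K} (hy : ∀ j, y j ≠ 0)
    (hinj : Function.Injective y) :
    (of fun (m : Fin n) j => (cauchyPoly y j).coeff m).det = (vandermonde y).det := by
  have hdiag : of (fun i j => (cauchyPoly y j).eval (y i)⁻¹)
      = diagonal fun i => ∏ k ∈ {i}ᶜ, (1 - y k * (y i)⁻¹) := by
    ext i j
    rcases eq_or_ne i j with rfl | hij
    · simp [eval_cauchyPoly]
    · rw [of_apply, eval_cauchyPoly, diagonal_apply_ne _ hij]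
      exact prod_eq_zero (by simpa using hij) (by rw [mul_inv_cancel₀ (hy i), sub_self])
  have hprod : ∏ i, ∏ k ∈ {i}ᶜ, (1 - y k * (y i)⁻¹)
      = (vandermonde fun i => (y i)⁻¹).det * (vandermonde y).det := by
    rw [det_vandermonde, det_vandermonde, ← prod_prod_Ioi_mul_eq_prod_prod_off_diag,
      ← prod_mul_distrib]
    refine prod_congr rfl fun i _ => ?_
    rw [← prod_mul_distrib]
    refine prod_congr rfl fun j _ => ?_
    field_simp [hy i, hy j]
  have hV : (vandermonde fun i => (y i)⁻¹).det ≠ 0 :=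
    det_vandermonde_ne_zero_iff.2 (inv_injective.comp hinj)
  apply mul_left_cancel₀ hV
  rw [← det_mul, ← of_eval_eq_vandermonde_mul_of_coeff _ _ (natDegree_cauchyPoly_lt y), hdiag,
    det_diagonal, hprod]

theorem det_inv_one_sub_mul (x y : Fin n → K) (hy : ∀ j, y j ≠ 0)
    (hxy : ∀ i j, x i * y j ≠ 1) :
    (of fun i j => (1 - x i * y j)⁻¹).det
      = (vandermonde x).det * (vandermonde y).det / ∏ i, ∏ j, (1 - x i * y j) := by
  have hne (i j : Fin n) : 1 - x i * y j ≠ 0 := sub_ne_zero.2 (hxy i j).symm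
  by_cases hinj : Function.Injective y
  · have hrow : of (fun i j => (1 - x i * y j)⁻¹)
        = of fun i j => (∏ k, (1 - x i * y k))⁻¹
            * (of fun i j => (cauchyPoly y j).eval (x i) : Matrix (Fin n) (Fin n) K) i j := by
      ext i j
      simp only [of_apply]
      rw [eval_cauchyPoly, Fintype.prod_eq_mul_prod_compl j]
      field_simp [hne i j, prod_ne_zero_iff.2 fun k _ => hne i k]
    rw [hrow, det_mul_column, of_eval_eq_vandermonde_mul_of_coeff _ _ (natDegree_cauchyPoly_lt y),
      det_mul, det_of_coeff_cauchyPoly hy hinj, prod_inv_distrib, div_eq_inv_mul]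
  · obtain ⟨j, k, hjk, hne⟩ := Function.not_injective_iff.1 hinj
    rw [det_zero_of_column_eq hne fun i => by simp [hjk],
      det_vandermonde_eq_zero_iff.2 ⟨j, k, hjk, hne⟩, mul_zero, zero_div]

theorem det_vandermonde_pow {q : K} (hq : q ≠ 0) (e : Fin n → ℕ) :
    (vandermonde fun i => q ^ e i).det
      = q ^ (∑ j : Fin n, (j : ℕ) * e j) * ∏ i, ∏ j ∈ Ioi i, (1 - q ^ ((e i : ℤ) - e j)) := by
  have hfactor (i j : Fin n) : q ^ e j - q ^ e i = q ^ e j * (1 - q ^ ((e i : ℤ) - e j)) := by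
    rw [mul_sub, mul_one, ← zpow_natCast, ← zpow_add₀ hq, add_sub_cancel, zpow_natCast,
      zpow_natCast]
  simp_rw [det_vandermonde, hfactor, prod_mul_distrib, prod_prod_Ioi_eq_prod_pow, ← pow_mul,
    prod_pow_eq_pow_sum, mul_comm]

end Cauchy

section Andreief

variable {n : ℕ}

theorem hasSum_fin_prod_of_nonneg {β : Type*} (f : Fin n → β → ℝ) (s : Fin n → ℝ)
    (hf : ∀ i k, 0 ≤ f i k) (hs : ∀ i, HasSum (f i) (s i)) :
    HasSum (fun ν : Fin n → β => ∏ i, f i (ν i)) (∏ i, s i) := by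
  induction n with
  | zero => simp
  | succ n ih =>
    have htail : HasSum (fun ν : Fin n → β => ∏ i, f i.succ (ν i)) (∏ i : Fin n, s i.succ) :=
      ih _ _ (fun i => hf i.succ) (fun i => hs i.succ)
    have htail_nonneg : ∀ ν : Fin n → β, 0 ≤ ∏ i, f i.succ (ν i) :=
      fun ν => prod_nonneg fun i _ => hf i.succ (ν i)
    have hsum := (hs 0).summable.mul_of_nonneg htail.summable (hf 0) htail_nonneg
    have hcons : (fun ν : Fin (n + 1) → β => ∏ i, f i (ν i)) ∘ Fin.consEquiv (fun _ => β)
        = fun p => f 0 p.1 * ∏ i, f i.succ (p.2 i) := by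
      ext p
      simp [Fin.prod_univ_succ]
    rw [Fin.prod_univ_succ, ← (Fin.consEquiv fun _ => β).hasSum_iff, hcons,
      (hs 0).mul_eq htail hsum.hasSum]
    exact hsum.hasSum

theorem sum_perm_sign_mul_det_submatrix {R : Type*} [CommRing R] (M : Matrix (Fin n) (Fin n) R) :
    ∑ τ : Equiv.Perm (Fin n), ((Equiv.Perm.sign τ : ℤ) : R) * (M.submatrix id τ).det
      = n.factorial * M.det := by
  simp_rw [det_permute', ← mul_assoc, Equiv.Perm.intCast_sign_mul_self, one_mul]
  rw [sum_const, card_univ, Fintype.card_perm, Fintype.card_fin, nsmul_eq_mul]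

theorem hasSum_det_mul_det_of_nonneg {β : Type*} (f g : Fin n → β → ℝ)
    (hf : ∀ i k, 0 ≤ f i k) (hg : ∀ i k, 0 ≤ g i k) (M : Matrix (Fin n) (Fin n) ℝ)
    (hM : ∀ i j, HasSum (fun k => f i k * g j k) (M i j)) :
    HasSum (fun ν : Fin n → β => (of fun i j => f i (ν j)).det * (of fun i j => g i (ν j)).det)
      (n.factorial * M.det) := by
  have hexpand : ∀ ν : Fin n → β,
      (of fun i j => f i (ν j)).det * (of fun i j => g i (ν j)).det
        = ∑ τ : Equiv.Perm (Fin n), ((Equiv.Perm.sign τ : ℤ) : ℝ) * ∑ σ : Equiv.Perm (Fin n),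
            ((Equiv.Perm.sign σ : ℤ) : ℝ) * ∏ k, f (σ k) (ν k) * g (τ k) (ν k) := by
    intro ν
    rw [det_apply', det_apply', sum_mul_sum, sum_comm]
    refine sum_congr rfl fun τ _ => ?_
    rw [mul_sum]
    refine sum_congr rfl fun σ _ => ?_
    simp only [of_apply, prod_mul_distrib]
    ring
  rw [← sum_perm_sign_mul_det_submatrix, funext hexpand]
  refine hasSum_sum fun τ _ => ?_
  rw [det_apply']
  refine (hasSum_sum fun σ _ => ?_).mul_left _
  exact (hasSum_fin_prod_of_nonneg _ _ (fun i k => mul_nonneg (hf _ _) (hg _ _))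
    fun k => hM (σ k) (τ k)).mul_left _

theorem det_of_pow_comp_perm {R : Type*} [CommRing R] (x : Fin n → R) (ν : Fin n → ℕ)
    (π : Equiv.Perm (Fin n)) :
    (of fun i j => x i ^ (ν ∘ π) j).det = Equiv.Perm.sign π * (of fun i j => x i ^ ν j).det :=
  det_permute' π (of fun i j => x i ^ ν j)

theorem det_of_pow_eq_zero_of_not_injective {R : Type*} [CommRing R] (x : Fin n → R) {ν : Fin n → ℕ}
    (hν : ¬ Function.Injective ν) : (of fun i j => x i ^ ν j).det = 0 := by
  obtain ⟨j, k, hjk, hne⟩ := Function.not_injective_iff.1 hν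
  exact det_zero_of_column_eq hne fun i => by simp [hjk]

theorem hasSum_det_pow_mul_det_pow (x y : Fin n → ℝ) (hx : ∀ i, 0 ≤ x i) (hy : ∀ j, 0 ≤ y j)
    (hxy : ∀ i j, x i * y j < 1) :
    HasSum (fun ν : Fin n → ℕ => (of fun i j => x i ^ ν j).det * (of fun i j => y i ^ ν j).det)
      (n.factorial * (of fun i j => (1 - x i * y j)⁻¹).det) :=
  hasSum_det_mul_det_of_nonneg (fun i k => x i ^ k) (fun j k => y j ^ k)
    (fun i k => pow_nonneg (hx i) k) (fun j k => pow_nonneg (hy j) k) _ fun i j => by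
      simpa only [of_apply, ← mul_pow] using
        hasSum_geometric_of_lt_one (mul_nonneg (hx i) (hy j)) (hxy i j)

theorem existsUnique_antitone_comp_perm {β : Type*} [LinearOrder β] {ν : Fin n → β}
    (hν : Function.Injective ν) : ∃! π : Equiv.Perm (Fin n), Antitone (ν ∘ π) := by
  have hsort : Antitone (ν ∘ Tuple.sort (OrderDual.toDual ∘ ν)) :=
    monotone_toDual_comp_iff.1 (Tuple.monotone_sort _)
  refine ⟨_, hsort, fun π hπ => Equiv.ext fun i =>
    hν (congrFun (?_ : ν ∘ π = ν ∘ Tuple.sort (OrderDual.toDual ∘ ν)) i)⟩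
  refine ((hπ.strictAnti_of_injective (hν.comp π.injective)).range_inj
    (hsort.strictAnti_of_injective (hν.comp (Equiv.injective _)))).1 ?_
  rw [π.surjective.range_comp, (Equiv.surjective _).range_comp]

theorem tsum_eq_factorial_mul_tsum_antitone {β : Type*} [LinearOrder β]
    {F : (Fin n → β) → ℝ} (hF : Summable F)
    (hperm : ∀ ν (π : Equiv.Perm (Fin n)), F (ν ∘ π) = F ν)
    (hzero : ∀ ν, ¬ Function.Injective ν → F ν = 0) :
    ∑' ν, F ν = n.factorial * ∑' ν : {ν : Fin n → β // Antitone ν}, F ν := by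
  classical
  set A : Set (Fin n → β) := {ν | Antitone ν}
  have hcount : ∀ ν, F ν = ∑ π : Equiv.Perm (Fin n), A.indicator F (ν ∘ π) := by
    intro ν
    by_cases hν : Function.Injective ν
    · obtain ⟨π₀, hπ₀, huniq⟩ := existsUnique_antitone_comp_perm hν
      rw [sum_eq_single π₀ (fun π _ hπ => Set.indicator_of_notMem (fun h => hπ (huniq π h)) _)
        (by simp), Set.indicator_of_mem hπ₀, hperm]
    · rw [hzero ν hν]
      exact (sum_eq_zero fun π _ =>
        Set.indicator_apply_eq_zero.2 fun _ => (hperm ν π).trans (hzero ν hν)).symm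
  have hshift (π : Equiv.Perm (Fin n)) :
      ∑' ν, A.indicator F (ν ∘ π) = ∑' ν, A.indicator F ν :=
    (Equiv.arrowCongr π.symm (Equiv.refl β)).tsum_eq (A.indicator F)
  have hsumm (π : Equiv.Perm (Fin n)) : Summable fun ν => A.indicator F (ν ∘ π) :=
    (Equiv.arrowCongr π.symm (Equiv.refl β)).summable_iff.2 (hF.indicator A)
  calc ∑' ν, F ν = ∑' ν, ∑ π : Equiv.Perm (Fin n), A.indicator F (ν ∘ π) := tsum_congr hcount
    _ = ∑ _π : Equiv.Perm (Fin n), ∑' ν, A.indicator F ν := by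
      rw [Summable.tsum_finsetSum fun π _ => hsumm π]
      exact sum_congr rfl fun π _ => hshift π
    _ = n.factorial * ∑' ν : A, F ν := by
      rw [_root_.tsum_subtype, sum_const, card_univ, Fintype.card_perm, Fintype.card_fin,
        nsmul_eq_mul]

theorem tsum_antitone_det_pow_mul_det_pow (x y : Fin n → ℝ) (hx : ∀ i, 0 ≤ x i)
    (hy : ∀ j, 0 ≤ y j) (hxy : ∀ i j, x i * y j < 1) :
    ∑' ν : {ν : Fin n → ℕ // Antitone ν},
        (of fun i j => x i ^ ν.1 j).det * (of fun i j => y i ^ ν.1 j).det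
      = (of fun i j => (1 - x i * y j)⁻¹).det := by
  have hsum := hasSum_det_pow_mul_det_pow x y hx hy hxy
  have hsym := tsum_eq_factorial_mul_tsum_antitone hsum.summable
    (fun ν π => by
      rw [det_of_pow_comp_perm, det_of_pow_comp_perm]
      linear_combination ((of fun i j => x i ^ ν j).det * (of fun i j => y i ^ ν j).det)
        * Equiv.Perm.intCast_sign_mul_self (R := ℝ) π)
    (fun ν hν => by rw [det_of_pow_eq_zero_of_not_injective x hν, zero_mul])
  rw [hsum.tsum_eq] at hsym
  exact (mul_left_cancel₀ (Nat.cast_ne_zero.2 n.factorial_ne_zero) hsym).symm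

end Andreief

section Staircase

variable {n : ℕ}

theorem cast_stair (lam : Fin n → ℕ) (j : Fin n) :
    ((stair n lam j : ℕ) : ℤ) = lam j + n - 1 - j := by
  have := j.2
  simp only [stair]
  omega

theorem alt_pow_eq_det (q : ℝ) (a ν : Fin n → ℕ) :
    alt n a (fun i => q ^ ν i) = (of fun i j => (q ^ a i) ^ ν j).det := by
  rw [alt, ← det_transpose]
  congr 1
  ext i j
  simp [← pow_mul, mul_comm]

theorem pow_sum_mul_alt_pow (q : ℝ) (a ν : Fin n → ℕ) :
    q ^ (∑ i, ν i) * alt n a (fun i => q ^ ν i) = (of fun i j => (q ^ (a i + 1)) ^ ν j).det := by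
  rw [alt_pow_eq_det, ← prod_pow_eq_pow_sum, ← det_mul_row]
  congr 1
  ext i j
  simp [pow_succ, mul_pow, mul_comm]

theorem cast_stair_sub_cast_stair (lam : Fin n → ℕ) (i j : Fin n) :
    ((stair n lam i : ℕ) : ℤ) - stair n lam j = lam i - lam j + j - i := by
  rw [cast_stair, cast_stair]
  ring

theorem pow_stair_succ_mul_pow_stair {K : Type*} [Field K] (q : K) (lam μ : Fin n → ℕ)
    (i j : Fin n) :
    q ^ (stair n lam i + 1) * q ^ stair n μ j
      = q ^ ((lam i : ℤ) + μ j + 2 * n - 1 - i - j) := by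
  rw [← pow_add, ← zpow_natCast]
  push_cast [cast_stair]
  ring_nf

theorem choose_two_add_sum_mul_eq_sum_mul_stair (lam μ : Fin n → ℕ) :
    n.choose 2 + 2 * n.choose 3 + ∑ i : Fin n, (i : ℕ) * (lam i + μ i)
      = ∑ j : Fin n, (j : ℕ) * (stair n lam j + 1) + ∑ j : Fin n, (j : ℕ) * stair n μ j := by
  rw [← sum_range_mul_two_mul_sub_add_one, ← Fin.sum_univ_eq_sum_range
    (fun j => j * (2 * (n - 1 - j) + 1)), ← sum_add_distrib, ← sum_add_distrib]
  refine sum_congr rfl fun j _ => ?_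
  simp only [stair]
  ring

end Staircase

theorem stmt8_general (q : ℝ) (hq0 : 0 < q) (hq1 : q < 1) (n : ℕ) (lam μ : Fin n → ℕ) :
    qint q n (fun x => alt n (stair n lam) x * alt n (stair n μ) x)
      = q ^ (n.choose 2 + 2 * n.choose 3 + ∑ i : Fin n, (i : ℕ) * (lam i + μ i))
          * (1 - q) ^ n
          * (∏ i : Fin n, ∏ j ∈ Finset.Ioi i,
              (1 - q ^ ((lam i : ℤ) - (lam j : ℤ) + ((j : ℕ) : ℤ) - ((i : ℕ) : ℤ)))
                * (1 - q ^ ((μ i : ℤ) - (μ j : ℤ) + ((j : ℕ) : ℤ) - ((i : ℕ) : ℤ))))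
          / (∏ i : Fin n, ∏ j : Fin n,
              (1 - q ^ ((lam i : ℤ) + (μ j : ℤ)
                  + 2 * (n : ℤ) - 1 - ((i : ℕ) : ℤ) - ((j : ℕ) : ℤ)))) := by
  set a := stair n lam
  set b := stair n μ
  have hxy (i j : Fin n) : q ^ (a i + 1) * q ^ b j < 1 := by
    rw [← pow_add]
    exact pow_lt_one₀ hq0.le hq1 (by omega)
  calc qint q n (fun x => alt n a x * alt n b x)
      = (1 - q) ^ n * ∑' ν : {ν : Fin n → ℕ // Antitone ν},
          (of fun i j => (q ^ (a i + 1)) ^ ν.1 j).det * (of fun i j => (q ^ b i) ^ ν.1 j).det := by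
        rw [qint]
        congr 1
        exact tsum_congr fun ν => by rw [← mul_assoc, pow_sum_mul_alt_pow, alt_pow_eq_det]
    _ = (1 - q) ^ n * (of fun i j => (1 - q ^ (a i + 1) * q ^ b j)⁻¹).det := by
        rw [tsum_antitone_det_pow_mul_det_pow _ _ (fun i => by positivity) (fun j => by positivity)
          hxy]
    _ = (1 - q) ^ n * ((vandermonde fun i => q ^ (a i + 1)).det * (vandermonde fun j => q ^ b j).det
          / ∏ i, ∏ j, (1 - q ^ (a i + 1) * q ^ b j)) := by
        rw [det_inv_one_sub_mul _ _ (fun j => by positivity) fun i j => (hxy i j).ne]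
    _ = _ := by
        rw [det_vandermonde_pow hq0.ne' (fun i => a i + 1), det_vandermonde_pow hq0.ne' b,
          choose_two_add_sum_mul_eq_sum_mul_stair, pow_add]
        simp only [Nat.cast_succ, add_sub_add_right_eq_sub, cast_stair_sub_cast_stair, a, b,
          pow_stair_succ_mul_pow_stair, prod_mul_distrib]
        ring

theorem stmt8 (q : ℝ) (hq0 : 0 < q) (hq1 : q < 1) (n : ℕ) (hn : 1 ≤ n)
    (lam μ : Fin n → ℕ) (hlam : Antitone lam) (hμ : Antitone μ) :
    qint q n (fun x => alt n (stair n lam) x * alt n (stair n μ) x)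
      = q ^ (n.choose 2 + 2 * n.choose 3 + ∑ i : Fin n, (i : ℕ) * (lam i + μ i))
          * (1 - q) ^ n
          * (∏ i : Fin n, ∏ j ∈ Finset.Ioi i,
              (1 - q ^ ((lam i : ℤ) - (lam j : ℤ) + ((j : ℕ) : ℤ) - ((i : ℕ) : ℤ)))
                * (1 - q ^ ((μ i : ℤ) - (μ j : ℤ) + ((j : ℕ) : ℤ) - ((i : ℕ) : ℤ))))
          / (∏ i : Fin n, ∏ j : Fin n,
              (1 - q ^ ((lam i : ℤ) + (μ j : ℤ)
                  + 2 * (n : ℤ) - 1 - ((i : ℕ) : ℤ) - ((j : ℕ) : ℤ)))) :=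
  stmt8_general q hq0 hq1 n lam μ
end

section
/- Let 0 < q < 1, let m ≥ 0 be an integer, and let λ = (λ_1,λ_2) and μ = (μ_1,μ_2) be partitions in Par_2. Then ∫_{0≤x_1≤x_2≤1} x_1^m a_{λ+δ_2}(x_1,x_2) a_{μ+δ_2}(x_1,x_2) d_q x_1 d_q x_2 = q^{λ_2+μ_2+m+1} · (1−q)^2 (1 − q^{|λ|+|μ|+2m+4}) (1 − q^{λ_1−λ_2+1}) (1 − q^{μ_1−μ_2+1}) / ( (1 − q^{|λ|+|μ|+m+4}) ∏_{i=1}^2 ∏_{j=1}^2 (1 − q^{λ_i+μ_j+m+5−i−j}) ). -/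
def parTwoEquiv : ℕ × ℕ ≃ {μ : Fin 2 → ℕ // Antitone μ} where
  toFun p := ⟨![p.1 + p.2, p.1], by simp [Antitone, Fin.forall_fin_two]⟩
  invFun μ := (μ.1 1, μ.1 0 - μ.1 1)
  left_inv p := by simp
  right_inv μ := by
    have h : μ.1 1 ≤ μ.1 0 := μ.2 (by decide : (0 : Fin 2) ≤ 1)
    ext i
    fin_cases i
    · simp; omega
    · simp

lemma alt_two (a b : ℕ) (x : Fin 2 → ℝ) :
    alt 2 ![a, b] x = x 0 ^ a * x 1 ^ b - x 0 ^ b * x 1 ^ a := by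
  simp [alt, Matrix.det_fin_two]

lemma hasSum_geometric_mul_geometric {r s : ℝ} (hr0 : 0 ≤ r) (hr1 : r < 1)
    (hs0 : 0 ≤ s) (hs1 : s < 1) :
    HasSum (fun p : ℕ × ℕ => r ^ p.1 * s ^ p.2) ((1 - r)⁻¹ * (1 - s)⁻¹) :=
  (hasSum_geometric_of_lt_one hr0 hr1).mul (hasSum_geometric_of_lt_one hs0 hs1)
    ((summable_geometric_of_lt_one hr0 hr1).mul_of_nonneg (summable_geometric_of_lt_one hs0 hs1)
      (fun i => pow_nonneg hr0 i) (fun i => pow_nonneg hs0 i))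

lemma one_sub_pow_ne_zero {R : Type*} [Ring R] [PartialOrder R] [IsOrderedRing R] {q : R}
    (hq0 : 0 ≤ q) (hq1 : q < 1) {n : ℕ} (hn : n ≠ 0) : 1 - q ^ n ≠ 0 :=
  sub_ne_zero.mpr (pow_lt_one₀ hq0 hq1 hn).ne'

lemma hasSum_qint_two_monomial {q : ℝ} (hq0 : 0 ≤ q) (hq1 : q < 1) (α β : ℕ) :
    HasSum (fun μ : {μ : Fin 2 → ℕ // Antitone μ} =>
        q ^ (∑ i, μ.1 i) * ((q ^ μ.1 0) ^ α * (q ^ μ.1 1) ^ β))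
      ((1 - q ^ (α + β + 2))⁻¹ * (1 - q ^ (α + 1))⁻¹) := by
  rw [← parTwoEquiv.hasSum_iff]
  convert hasSum_geometric_mul_geometric (pow_nonneg hq0 _)
    (pow_lt_one₀ hq0 hq1 (by omega : α + β + 2 ≠ 0)) (pow_nonneg hq0 _)
    (pow_lt_one₀ hq0 hq1 (by omega : α + 1 ≠ 0)) using 1
  funext p
  simp only [Fin.sum_univ_two, parTwoEquiv, Equiv.coe_fn_mk, Function.comp_apply,
    Matrix.cons_val_zero, Matrix.cons_val_one, Matrix.cons_val_fin_one]
  ring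

lemma inv_sub_inv_sub_inv_add_inv {K : Type*} [Field K] {Q a b : K} (hab : 1 - Q * a * b ≠ 0)
    (ha : 1 - Q * a ≠ 0) (hb : 1 - Q * b ≠ 0) (hQ : 1 - Q ≠ 0) :
    (1 - Q * a * b)⁻¹ - (1 - Q * a)⁻¹ - (1 - Q * b)⁻¹ + (1 - Q)⁻¹
      = Q * (1 - Q ^ 2 * a * b) * (1 - a) * (1 - b)
        / ((1 - Q * a * b) * (1 - Q * a) * (1 - Q * b) * (1 - Q)) := by
  field_simp
  ring

lemma hasSum_qint_two_alt_mul_alt {q : ℝ} (hq0 : 0 ≤ q) (hq1 : q < 1) (m l1 l2 m1 m2 : ℕ) :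
    HasSum (fun μ : {μ : Fin 2 → ℕ // Antitone μ} => q ^ (∑ i, μ.1 i) *
      ((q ^ μ.1 0) ^ m * alt 2 ![l1 + 1, l2] (fun i => q ^ μ.1 i)
        * alt 2 ![m1 + 1, m2] (fun i => q ^ μ.1 i)))
      ((1 - q ^ (l1 + l2 + m1 + m2 + m + 4))⁻¹
        * ((1 - q ^ (l1 + m1 + m + 3))⁻¹ - (1 - q ^ (l1 + m2 + m + 2))⁻¹
          - (1 - q ^ (l2 + m1 + m + 2))⁻¹ + (1 - q ^ (l2 + m2 + m + 1))⁻¹)) := by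
  have hmono := hasSum_qint_two_monomial hq0 hq1
  convert (((hmono (m + (l1 + 1) + (m1 + 1)) (l2 + m2)).sub
    (hmono (m + (l1 + 1) + m2) (l2 + (m1 + 1)))).sub
    (hmono (m + l2 + (m1 + 1)) ((l1 + 1) + m2))).add
    (hmono (m + l2 + m2) ((l1 + 1) + (m1 + 1))) using 1
  · rfl -- `HasSum.sub` builds `AddCommMonoid ℝ` from `AddCommGroup ℝ`
  · funext μ
    simp only [alt_two]
    ring
  · ring_nf

theorem stmt9_general (q : ℝ) (hq0 : 0 < q) (hq1 : q < 1) (m : ℕ)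
    (l1 l2 m1 m2 : ℕ) :
    qint q 2 (fun x =>
        x 0 ^ m * alt 2 ![l1 + 1, l2] x * alt 2 ![m1 + 1, m2] x)
      = q ^ (l2 + m2 + m + 1)
          * ((1 - q) ^ 2 * (1 - q ^ (l1 + l2 + m1 + m2 + 2 * m + 4))
              * (1 - q ^ ((l1 : ℤ) - l2 + 1)) * (1 - q ^ ((m1 : ℤ) - m2 + 1)))
          / ((1 - q ^ (l1 + l2 + m1 + m2 + m + 4))
              * ((1 - q ^ (l1 + m1 + m + 3)) * (1 - q ^ (l1 + m2 + m + 2))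
                  * (1 - q ^ (l2 + m1 + m + 2)) * (1 - q ^ (l2 + m2 + m + 1)))) := by
  have hne := fun n (hn : n ≠ 0) => one_sub_pow_ne_zero hq0.le hq1 hn
  have hN := hne (l1 + l2 + m1 + m2 + m + 4) (by omega)
  have hQab := hne (l1 + m1 + m + 3) (by omega)
  have hQa := hne (l1 + m2 + m + 2) (by omega)
  have hQb := hne (l2 + m1 + m + 2) (by omega)
  have hQ := hne (l2 + m2 + m + 1) (by omega)
  rw [qint, (hasSum_qint_two_alt_mul_alt hq0.le hq1 m l1 l2 m1 m2).tsum_eq]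
  set Q := q ^ (l2 + m2 + m + 1)
  set a := q ^ ((l1 : ℤ) - l2 + 1)
  set b := q ^ ((m1 : ℤ) - m2 + 1)
  obtain ⟨eQab, eQa, eQb, eQQab⟩ : q ^ (l1 + m1 + m + 3) = Q * a * b ∧
      q ^ (l1 + m2 + m + 2) = Q * a ∧ q ^ (l2 + m1 + m + 2) = Q * b ∧
      q ^ (l1 + l2 + m1 + m2 + 2 * m + 4) = Q ^ 2 * a * b := by
    refine ⟨?_, ?_, ?_, ?_⟩ <;>
    · simp only [Q, a, b, ← zpow_natCast, ← zpow_add₀ hq0.ne', ← zpow_mul]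
      congr 1
      push_cast
      ring
  simp only [eQab, eQa, eQb, eQQab] at hQab hQa hQb ⊢
  rw [inv_sub_inv_sub_inv_add_inv hQab hQa hQb hQ]
  field_simp

theorem stmt9 (q : ℝ) (hq0 : 0 < q) (hq1 : q < 1) (m : ℕ)
    (l1 l2 m1 m2 : ℕ) (hl : l2 ≤ l1) (hm : m2 ≤ m1) :
    qint q 2 (fun x =>
        x 0 ^ m * alt 2 ![l1 + 1, l2] x * alt 2 ![m1 + 1, m2] x)
      = q ^ (l2 + m2 + m + 1)
          * ((1 - q) ^ 2 * (1 - q ^ (l1 + l2 + m1 + m2 + 2 * m + 4))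
              * (1 - q ^ ((l1 : ℤ) - l2 + 1)) * (1 - q ^ ((m1 : ℤ) - m2 + 1)))
          / ((1 - q ^ (l1 + l2 + m1 + m2 + m + 4))
              * ((1 - q ^ (l1 + m1 + m + 3)) * (1 - q ^ (l1 + m2 + m + 2))
                  * (1 - q ^ (l2 + m1 + m + 2)) * (1 - q ^ (l2 + m2 + m + 1)))) :=
  stmt9_general q hq0 hq1 m l1 l2 m1 m2
end

section
/- Let 0 < q < 1, let n ≥ 2 and k ≥ 0 be integers, and let λ ∈ Par_{n−1} and μ ∈ Par_{n+1} be partitions. Then ∏_{j=1}^{n−1}(1 − q^{|λ|+|μ|+λ_j+n²+n−j+k+1}) / ∏_{i=1}^{n+1}(1 − q^{|λ|+|μ|−μ_i+n²−n+k+i}) = ∑_{ℓ=1}^{n+1} ( q^{−|λ|−|μ|+μ_ℓ−n²+n−k−ℓ} / (1 − q^{|λ|+|μ|−μ_ℓ+n²−n+k+ℓ}) ) · ( ∏_{j=1}^{n−1}(1 − q^{μ_ℓ+λ_j+2n−ℓ−j+1}) / ∏_{j=1, j≠ℓ}^{n+1}(1 − q^{μ_ℓ−μ_j+j−ℓ})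 ). -/
/-!
With (1-based) `y ℓ = q ^ (μ ℓ - ℓ)`, `c = q ^ (|λ| + |μ| + n² - n + k)` and
`a j = q ^ (λ j + 2n + 1 - j)`, the identity is, after clearing powers of `q`, the partial-fraction
expansion of `f c / ∏ ℓ (c - y ℓ)` with `f x = x ∏ j (1 - a j x)`. The nodes `y ℓ` are distinct
because `μ` is weakly decreasing and `0 < q < 1`, `c` is not a node because its exponent exceeds
every `μ ℓ - ℓ`, and `f` has degree `n`, less than the number `n + 1` of nodes, so Lagrange
interpolation at the nodes recovers `f`.
-/

open Finset Polynomial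

theorem Lagrange.eval_div_prod_sub_eq_sum {F ι : Type*} [Field F] [DecidableEq ι]
    {s : Finset ι} {v : ι → F} (hvs : Set.InjOn v s) {f : F[X]} (hf : f.degree < #s)
    {x : F} (hx : ∀ i ∈ s, x ≠ v i) :
    f.eval x / ∏ i ∈ s, (x - v i)
      = ∑ i ∈ s, f.eval (v i) / ((x - v i) * ∏ j ∈ s.erase i, (v i - v j)) := by
  have hnodal : ∏ i ∈ s, (x - v i) ≠ 0 := prod_ne_zero_iff.mpr fun i hi => sub_ne_zero.mpr (hx i hi)
  conv_lhs => rw [eq_interpolate hvs hf, eval_interpolate_not_at_node _ hx, eval_nodal,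
    mul_div_cancel_left₀ _ hnodal]
  refine sum_congr rfl fun i _ => ?_
  rw [nodalWeight, prod_inv_distrib, div_eq_mul_inv, mul_inv]
  ring

theorem natDegree_X_mul_prod_one_sub_C_mul_X_le {F κ : Type*} [Field F] [Fintype κ] (a : κ → F) :
    (X * ∏ j, (1 - C (a j) * X)).natDegree ≤ Fintype.card κ + 1 := by
  have hfactor : ∀ j, (1 - C (a j) * X).natDegree ≤ 1 := fun j => by compute_degree
  calc (X * ∏ j, (1 - C (a j) * X)).natDegree
      ≤ 1 + ∑ j, (1 - C (a j) * X).natDegree := by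
        exact natDegree_mul_le.trans (add_le_add natDegree_X_le (natDegree_prod_le _ _))
    _ ≤ 1 + ∑ _j : κ, 1 := by gcongr with j; exact hfactor j
    _ = Fintype.card κ + 1 := by simp [add_comm]

theorem prod_one_sub_mul_div_prod_one_sub_div_eq_sum {F ι κ : Type*} [Field F]
    [Fintype ι] [DecidableEq ι] [Fintype κ] {y : ι → F} (hy : Function.Injective y)
    (hy0 : ∀ i, y i ≠ 0) {c : F} (hc0 : c ≠ 0) (hc : ∀ i, c ≠ y i) (a : κ → F)
    (hcard : Fintype.card κ + 1 < Fintype.card ι) :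
    (∏ j, (1 - a j * c)) / ∏ i, (1 - c / y i)
      = ∑ ℓ, y ℓ / c / (1 - c / y ℓ)
          * ((∏ j, (1 - a j * y ℓ)) / ∏ j ∈ univ.erase ℓ, (1 - y ℓ / y j)) := by
  set f : F[X] := X * ∏ j, (1 - C (a j) * X)
  have hf_eval : ∀ x, f.eval x = x * ∏ j, (1 - a j * x) := fun x => by simp [f, eval_prod]
  have hf_deg : f.degree < #(univ : Finset ι) := by
    refine degree_le_natDegree.trans_lt ?_
    exact_mod_cast (natDegree_X_mul_prod_one_sub_C_mul_X_le a).trans_lt hcard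
  have one_sub_div : ∀ u i, 1 - u / y i = (u - y i) / -y i := fun u i => by
    field_simp [hy0 i]; ring
  set P := ∏ i, -y i
  have hP : ∀ ℓ, P = -y ℓ * ∏ j ∈ univ.erase ℓ, -y j := fun ℓ =>
    (mul_prod_erase _ _ (mem_univ ℓ)).symm
  calc (∏ j, (1 - a j * c)) / ∏ i, (1 - c / y i)
      = P / c * (f.eval c / ∏ i, (c - y i)) := by
        rw [prod_congr rfl fun i _ => one_sub_div c i, prod_div_distrib, hf_eval,
          div_div_eq_mul_div, mul_div_assoc c, ← mul_assoc, div_mul_cancel₀ _ hc0]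
        ring
    _ = P / c * ∑ ℓ, f.eval (y ℓ) / ((c - y ℓ) * ∏ j ∈ univ.erase ℓ, (y ℓ - y j)) := by
        rw [Lagrange.eval_div_prod_sub_eq_sum hy.injOn hf_deg fun i _ => hc i]
    _ = _ := by
        rw [mul_sum]
        refine sum_congr rfl fun ℓ _ => ?_
        rw [prod_congr rfl fun j _ => one_sub_div (y ℓ) j, prod_div_distrib, one_sub_div,
          hf_eval, hP ℓ]
        have hnodes : ∏ j ∈ univ.erase ℓ, (y ℓ - y j) ≠ 0 :=
          prod_ne_zero_iff.mpr fun j hj => sub_ne_zero.mpr (hy.ne (mem_erase.mp hj).1.symm)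
        have hP_erase : ∏ j ∈ univ.erase ℓ, -y j ≠ 0 :=
          prod_ne_zero_iff.mpr fun j _ => neg_ne_zero.mpr (hy0 j)
        field_simp [hy0 ℓ, sub_ne_zero.mpr (hc ℓ)]

theorem prod_one_sub_zpow_div_prod_one_sub_zpow_eq_sum {F ι κ : Type*} [Field F]
    [Fintype ι] [DecidableEq ι] [Fintype κ] {q : F} (hq : Function.Injective (q ^ · : ℤ → F))
    {e : ι → ℤ} (he : Function.Injective e) {A : ℤ} (hA : ∀ i, A ≠ e i) (α : κ → ℤ)
    (hcard : Fintype.card κ + 1 < Fintype.card ι) :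
    (∏ j, (1 - q ^ (α j + A))) / ∏ i, (1 - q ^ (A - e i))
      = ∑ ℓ, q ^ (e ℓ - A) / (1 - q ^ (A - e ℓ))
          * ((∏ j, (1 - q ^ (α j + e ℓ))) / ∏ j ∈ univ.erase ℓ, (1 - q ^ (e ℓ - e j))) := by
  have hq0 : q ≠ 0 := by
    rintro rfl
    exact absurd (@hq 1 2 (by simp)) (by decide)
  simp only [zpow_add₀ hq0, zpow_sub₀ hq0]
  exact prod_one_sub_mul_div_prod_one_sub_div_eq_sum (hq.comp he) (fun i => zpow_ne_zero _ hq0)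
    (zpow_ne_zero _ hq0) (fun i => hq.ne (hA i)) _ hcard

theorem stmt11_general (q : ℝ) (hq0 : 0 < q) (hq1 : q < 1) (n k : ℕ) (hn : 2 ≤ n)
    (lam : Fin (n - 1) → ℕ)
    (μ : Fin (n + 1) → ℕ) (hμ : Antitone μ) :
    (∏ j : Fin (n - 1),
        (1 - q ^ (((∑ t, lam t : ℕ) : ℤ) + ((∑ t, μ t : ℕ) : ℤ) + (lam j : ℤ)
            + (n : ℤ) ^ 2 + (n : ℤ) - (((j : ℕ) : ℤ) + 1) + (k : ℤ) + 1)))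
      / (∏ i : Fin (n + 1),
          (1 - q ^ (((∑ t, lam t : ℕ) : ℤ) + ((∑ t, μ t : ℕ) : ℤ) - (μ i : ℤ)
              + (n : ℤ) ^ 2 - (n : ℤ) + (k : ℤ) + (((i : ℕ) : ℤ) + 1))))
      = ∑ ℓ : Fin (n + 1),
          (q ^ (-((∑ t, lam t : ℕ) : ℤ) - ((∑ t, μ t : ℕ) : ℤ) + (μ ℓ : ℤ)
              - (n : ℤ) ^ 2 + (n : ℤ) - (k : ℤ) - (((ℓ : ℕ) : ℤ) + 1))
            / (1 - q ^ (((∑ t, lam t : ℕ) : ℤ) + ((∑ t, μ t : ℕ) : ℤ) - (μ ℓ : ℤ)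
                + (n : ℤ) ^ 2 - (n : ℤ) + (k : ℤ) + (((ℓ : ℕ) : ℤ) + 1))))
          * ((∏ j : Fin (n - 1),
              (1 - q ^ ((μ ℓ : ℤ) + (lam j : ℤ) + 2 * (n : ℤ)
                  - (((ℓ : ℕ) : ℤ) + 1) - (((j : ℕ) : ℤ) + 1) + 1)))
            / (∏ j ∈ Finset.univ.erase ℓ,
                (1 - q ^ ((μ ℓ : ℤ) - (μ j : ℤ) + ((j : ℕ) : ℤ) - ((ℓ : ℕ) : ℤ))))) := by
  set A : ℤ := (∑ t, lam t : ℕ) + (∑ t, μ t : ℕ) + (n : ℤ) ^ 2 - n + k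
  set e : Fin (n + 1) → ℤ := fun ℓ => μ ℓ - ((ℓ : ℕ) + 1)
  have he : StrictAnti e := fun i j hij => by
    have hμij := hμ hij.le
    have hij' : (i : ℕ) < j := hij
    simp only [e]
    omega
  have hA : ∀ ℓ, A ≠ e ℓ := fun ℓ => by
    have hμ_le := single_le_sum (fun t _ => Nat.zero_le (μ t)) (mem_univ ℓ)
    have hn_sq : (n : ℤ) ≤ n ^ 2 := by nlinarith
    simp only [A, e]
    omega
  convert prod_one_sub_zpow_div_prod_one_sub_zpow_eq_sum
    (zpow_right_strictAnti₀ hq0 hq1).injective he.injective hA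
    (fun j : Fin (n - 1) => (lam j : ℤ) + 2 * n - (j : ℕ)) (by simp; omega) using 5
    <;> simp only [A, e] <;> ring_nf

theorem stmt11 (q : ℝ) (hq0 : 0 < q) (hq1 : q < 1) (n k : ℕ) (hn : 2 ≤ n)
    (lam : Fin (n - 1) → ℕ) (hlam : Antitone lam)
    (μ : Fin (n + 1) → ℕ) (hμ : Antitone μ) :
    (∏ j : Fin (n - 1),
        (1 - q ^ (((∑ t, lam t : ℕ) : ℤ) + ((∑ t, μ t : ℕ) : ℤ) + (lam j : ℤ)
            + (n : ℤ) ^ 2 + (n : ℤ) - (((j : ℕ) : ℤ) + 1) + (k : ℤ) + 1)))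
      / (∏ i : Fin (n + 1),
          (1 - q ^ (((∑ t, lam t : ℕ) : ℤ) + ((∑ t, μ t : ℕ) : ℤ) - (μ i : ℤ)
              + (n : ℤ) ^ 2 - (n : ℤ) + (k : ℤ) + (((i : ℕ) : ℤ) + 1))))
      = ∑ ℓ : Fin (n + 1),
          (q ^ (-((∑ t, lam t : ℕ) : ℤ) - ((∑ t, μ t : ℕ) : ℤ) + (μ ℓ : ℤ)
              - (n : ℤ) ^ 2 + (n : ℤ) - (k : ℤ) - (((ℓ : ℕ) : ℤ) + 1))
            / (1 - q ^ (((∑ t, lam t : ℕ) : ℤ) + ((∑ t, μ t : ℕ) : ℤ) - (μ ℓ : ℤ)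
                + (n : ℤ) ^ 2 - (n : ℤ) + (k : ℤ) + (((ℓ : ℕ) : ℤ) + 1))))
          * ((∏ j : Fin (n - 1),
              (1 - q ^ ((μ ℓ : ℤ) + (lam j : ℤ) + 2 * (n : ℤ)
                  - (((ℓ : ℕ) : ℤ) + 1) - (((j : ℕ) : ℤ) + 1) + 1)))
            / (∏ j ∈ Finset.univ.erase ℓ,
                (1 - q ^ ((μ ℓ : ℤ) - (μ j : ℤ) + ((j : ℕ) : ℤ) - ((ℓ : ℕ) : ℤ))))) :=
  stmt11_general q hq0 hq1 n k hn lam μ hμ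
end

section
/- Let 0 < q < 1, let n ≥ 1 and k ≥ 1 be integers, and let μ ∈ Par_n be a partition. Then ∏_{j=1}^n (1 − q^{|μ|+μ_j+k+n(n+3)/2−j+1}) / (1 − q^{|μ|−μ_j+k+C(n,2)+j−1}) = (1 − q^{2|μ|+2C(n+1,2)+k})/(1 − q^k) − q^{−C(n,2)−|μ|} ((1 + q^{|μ|+C(n+1,2)+k})/(1 − q^k)) · ∑_{ℓ=1}^n q^{μ_ℓ−ℓ+1} · ((1 − q^{C(n,2)+|μ|−μ_ℓ+ℓ−1})/(1 − q^{C(n,2)+|μ|−μ_ℓ+ℓ+k−1})) · (1 − q^{n+1−ℓ+μ_ℓ}) · ∏_{j=1, j≠ℓ}^n (1 − q^{2n+2−j−ℓ+μ_j+μ_ℓ}) / (1 − q^{μ_ℓ−μ_j+j−ℓ}), where C(a,b) denotes a binomial coefficient. -/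
/-!
Put `z_j = q ^ (μ_j + n - j)` (with `0`-based `j`), `F = ∏ z_j = q ^ (|μ| + C(n,2) + n)` and
`X = q ^ k`. The left-hand side is then the rational function `∏ (1 - F z_j X) / (1 - F z_j⁻¹ X)`
of `X`; its poles `z_j / F` are simple because the `z_j` are distinct, so it has a partial fraction
expansion with constant term `F²` and residue coefficients
`(1 - z_ℓ²) ∏_{j ≠ ℓ} (1 - z_j z_ℓ) / (1 - z_ℓ / z_j)`. At `X = -F⁻¹` every factor of the product
equals `z_j`, so evaluating the expansion there shows
`∑_ℓ z_ℓ (1 - z_ℓ) ∏_{j ≠ ℓ} (1 - z_j z_ℓ) / (1 - z_ℓ / z_j) = F (1 - F)`, and with this relation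
the expansion rearranges into the stated right-hand side.
-/

open Finset

section PartialFractions

variable {ι K : Type*} [Field K] [DecidableEq ι] {s : Finset ι}

lemma div_one_sub_mul_div_one_sub_mul {a u v x : K} (hu : u ≠ 0) (hv : v ≠ 0) (huv : u ≠ v)
    (hux : 1 - u * x ≠ 0) (hvx : 1 - v * x ≠ 0) :
    (1 - a * x) / (1 - v * x) / (1 - u * x)
      = (1 - a * u⁻¹) / (1 - v * u⁻¹) / (1 - u * x)
        + (1 - a * v⁻¹) / (1 - v * x) / (1 - u * v⁻¹) := by
  have hux' : 1 - x * u ≠ 0 := by rwa [mul_comm]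
  have hvx' : 1 - x * v ≠ 0 := by rwa [mul_comm]
  have huv' : u - v ≠ 0 := sub_ne_zero.mpr huv
  have hvu' : v - u ≠ 0 := sub_ne_zero.mpr huv.symm
  field_simp
  ring

theorem prod_one_sub_mul_div_one_sub_mul {a c : ι → K} (hc : ∀ i ∈ s, c i ≠ 0)
    (hinj : Set.InjOn c s) {x : K} (hx : ∀ i ∈ s, 1 - c i * x ≠ 0) :
    ∏ i ∈ s, (1 - a i * x) / (1 - c i * x)
      = ∏ i ∈ s, a i / c i + ∑ ℓ ∈ s, (1 - a ℓ * (c ℓ)⁻¹)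
          * (∏ i ∈ s.erase ℓ, (1 - a i * (c ℓ)⁻¹) / (1 - c i * (c ℓ)⁻¹)) / (1 - c ℓ * x) := by
  induction s using Finset.induction_on generalizing x with
  | empty => simp
  | insert i₀ s hi₀ ih =>
    simp only [mem_insert, forall_eq_or_imp] at hc hx
    have hinj' : Set.InjOn c s := hinj.mono (by simp)
    have hne : ∀ ℓ ∈ s, c ℓ ≠ c i₀ := fun ℓ hℓ h ↦
      hi₀ (hinj (by simp [hℓ]) (by simp) h ▸ hℓ)
    have hy₀ : ∀ i ∈ s, 1 - c i * (c i₀)⁻¹ ≠ 0 := fun i hi ↦ by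
      rw [sub_ne_zero, ne_comm, ← div_eq_mul_inv, ne_eq, div_eq_one_iff_eq hc.1]
      exact hne i hi
    have hsplit : (1 - a i₀ * x) / (1 - c i₀ * x)
        = a i₀ / c i₀ + (1 - a i₀ * (c i₀)⁻¹) / (1 - c i₀ * x) := by
      have : 1 - x * c i₀ ≠ 0 := by rw [mul_comm]; exact hx.1
      field_simp [hc.1]
      ring
    have hterm : ∀ ℓ ∈ s, (1 - a i₀ * x) / (1 - c i₀ * x) * ((1 - a ℓ * (c ℓ)⁻¹)
          * (∏ i ∈ s.erase ℓ, (1 - a i * (c ℓ)⁻¹) / (1 - c i * (c ℓ)⁻¹)) / (1 - c ℓ * x))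
        = (1 - a ℓ * (c ℓ)⁻¹) * (∏ i ∈ (insert i₀ s).erase ℓ,
            (1 - a i * (c ℓ)⁻¹) / (1 - c i * (c ℓ)⁻¹)) / (1 - c ℓ * x)
          + (1 - a i₀ * (c i₀)⁻¹) / (1 - c i₀ * x) * ((1 - a ℓ * (c ℓ)⁻¹)
            * (∏ i ∈ s.erase ℓ, (1 - a i * (c ℓ)⁻¹) / (1 - c i * (c ℓ)⁻¹))
              / (1 - c ℓ * (c i₀)⁻¹)) := by
      intro ℓ hℓ
      rw [erase_insert_of_ne (ne_of_mem_of_not_mem hℓ hi₀).symm,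
        prod_insert fun h ↦ hi₀ (mem_of_mem_erase h)]
      linear_combination
        ((1 - a ℓ * (c ℓ)⁻¹) * ∏ i ∈ s.erase ℓ, (1 - a i * (c ℓ)⁻¹) / (1 - c i * (c ℓ)⁻¹))
          * div_one_sub_mul_div_one_sub_mul (a := a i₀) (hc.2 ℓ hℓ) hc.1 (hne ℓ hℓ) (hx.2 ℓ hℓ) hx.1
    -- the new residue at `c i₀` is read off from the induction hypothesis at `x = (c i₀)⁻¹`
    rw [prod_insert hi₀, prod_insert hi₀, sum_insert hi₀, erase_insert hi₀, ih hc.2 hinj' hx.2,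
      ih hc.2 hinj' hy₀, mul_add, mul_sum, sum_congr rfl hterm, sum_add_distrib, ← mul_sum, hsplit]
    ring

end PartialFractions

section ShiftedProducts

variable {ι K : Type*} [Field K] [DecidableEq ι] {s : Finset ι} {z : ι → K} {F : K}

theorem prod_one_sub_mul_div_one_sub_div_mul_eq_sq_add_sum (hz : ∀ i ∈ s, z i ≠ 0)
    (hinj : Set.InjOn z s) (hF : ∏ i ∈ s, z i = F) {x : K}
    (hx : ∀ i ∈ s, 1 - F / z i * x ≠ 0) :
    ∏ i ∈ s, (1 - F * z i * x) / (1 - F / z i * x)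
      = F ^ 2 + ∑ ℓ ∈ s, (1 - z ℓ ^ 2)
          * (∏ j ∈ s.erase ℓ, (1 - z j * z ℓ) / (1 - z ℓ / z j)) / (1 - F / z ℓ * x) := by
  have hF0 : F ≠ 0 := hF ▸ prod_ne_zero_iff.mpr hz
  have hpoles : Set.InjOn (fun i ↦ F / z i) s := fun i hi j hj h ↦
    hinj hi hj (by simpa [div_eq_div_iff, hF0, hz i hi, hz j hj, eq_comm] using h)
  rw [prod_one_sub_mul_div_one_sub_mul (fun i hi ↦ div_ne_zero hF0 (hz i hi)) hpoles hx]
  congr 1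
  · rw [prod_congr rfl fun i hi ↦ show F * z i / (F / z i) = z i ^ 2 by field_simp [hz i hi],
      prod_pow, hF]
  · refine sum_congr rfl fun ℓ hℓ ↦ ?_
    have := hz ℓ hℓ
    congr 2
    · field_simp
    · refine prod_congr rfl fun j hj ↦ ?_
      have := hz j (mem_of_mem_erase hj)
      field_simp

theorem sum_mul_one_sub_mul_prod_eq_mul_one_sub (hz : ∀ i ∈ s, z i ≠ 0)
    (hinj : Set.InjOn z s) (hz1 : ∀ i ∈ s, 1 + z i ≠ 0) (hF : ∏ i ∈ s, z i = F) :
    ∑ ℓ ∈ s, z ℓ * (1 - z ℓ) * ∏ j ∈ s.erase ℓ, (1 - z j * z ℓ) / (1 - z ℓ / z j)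
      = F * (1 - F) := by
  have hF0 : F ≠ 0 := hF ▸ prod_ne_zero_iff.mpr hz
  have hpole : ∀ i ∈ s, 1 - F / z i * -F⁻¹ = (1 + z i) / z i := fun i hi ↦ by
    have := hz i hi
    field_simp
    ring
  have hfactor : ∀ i ∈ s, (1 - F * z i * -F⁻¹) / (1 - F / z i * -F⁻¹) = z i := fun i hi ↦ by
    rw [hpole i hi]
    have := hz i hi
    have := hz1 i hi
    field_simp
    ring
  have hterm : ∀ ℓ ∈ s, (1 - z ℓ ^ 2) * (∏ j ∈ s.erase ℓ, (1 - z j * z ℓ) / (1 - z ℓ / z j))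
        / (1 - F / z ℓ * -F⁻¹)
      = z ℓ * (1 - z ℓ) * ∏ j ∈ s.erase ℓ, (1 - z j * z ℓ) / (1 - z ℓ / z j) := fun ℓ hℓ ↦ by
    rw [hpole ℓ hℓ]
    have := hz ℓ hℓ
    have := hz1 ℓ hℓ
    field_simp
    ring
  have h := prod_one_sub_mul_div_one_sub_div_mul_eq_sq_add_sum hz hinj hF (x := -F⁻¹)
    fun i hi ↦ (hpole i hi).symm ▸ div_ne_zero (hz1 i hi) (hz i hi)
  rw [prod_congr rfl hfactor, hF, sum_congr rfl hterm] at h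
  linear_combination -h

theorem prod_one_sub_mul_div_one_sub_div_mul {X : K} (hz : ∀ i ∈ s, z i ≠ 0)
    (hinj : Set.InjOn z s) (hz1 : ∀ i ∈ s, 1 + z i ≠ 0) (hF : ∏ i ∈ s, z i = F)
    (hX : 1 - X ≠ 0) (hzX : ∀ i ∈ s, 1 - F / z i * X ≠ 0) :
    ∏ i ∈ s, (1 - F * z i * X) / (1 - F / z i * X)
      = (1 - F ^ 2 * X) / (1 - X) - (1 + F * X) / (1 - X) * ∑ ℓ ∈ s,
          z ℓ / F * ((1 - F / z ℓ) / (1 - F / z ℓ * X)) * (1 - z ℓ)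
            * ∏ j ∈ s.erase ℓ, (1 - z j * z ℓ) / (1 - z ℓ / z j) := by
  have hF0 : F ≠ 0 := hF ▸ prod_ne_zero_iff.mpr hz
  set P : ι → K := fun ℓ ↦ ∏ j ∈ s.erase ℓ, (1 - z j * z ℓ) / (1 - z ℓ / z j)
  have hterm : ∀ ℓ ∈ s, (1 + F * X) / (1 - X)
        * (z ℓ / F * ((1 - F / z ℓ) / (1 - F / z ℓ * X)) * (1 - z ℓ) * P ℓ)
      = (1 + F) / ((1 - X) * F) * (z ℓ * (1 - z ℓ) * P ℓ)
        - (1 - z ℓ ^ 2) * P ℓ / (1 - F / z ℓ * X) := by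
    intro ℓ hℓ
    have := hz ℓ hℓ
    have hpole : 1 - F / z ℓ * X = (z ℓ - F * X) / z ℓ := by field_simp
    have : z ℓ - F * X ≠ 0 := fun h ↦ hzX ℓ hℓ (by rw [hpole, h, zero_div])
    rw [hpole]
    field_simp
    ring
  have hconst : (1 - F ^ 2 * X) / (1 - X) - (1 + F) / ((1 - X) * F) * (F * (1 - F)) = F ^ 2 := by
    field_simp
    ring
  rw [prod_one_sub_mul_div_one_sub_div_mul_eq_sq_add_sum hz hinj hF hzX, mul_sum,
    sum_congr rfl hterm, sum_sub_distrib, ← mul_sum,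
    sum_mul_one_sub_mul_prod_eq_mul_one_sub hz hinj hz1 hF]
  linear_combination -hconst

end ShiftedProducts

lemma prod_zpow_eq_zpow_sum {ι G : Type*} [CommGroupWithZero G] {a : G} (ha : a ≠ 0)
    (s : Finset ι) (f : ι → ℤ) : ∏ i ∈ s, a ^ f i = a ^ ∑ i ∈ s, f i := by
  classical
  induction s using Finset.induction_on with
  | empty => simp
  | insert i s hi ih => rw [prod_insert hi, sum_insert hi, ih, zpow_add₀ ha]

lemma one_sub_zpow_ne_zero {K : Type*} [Field K] [LinearOrder K] [IsStrictOrderedRing K] {q : K}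
    (hq0 : 0 < q) (hq1 : q < 1) {e : ℤ} (he : 0 < e) : 1 - q ^ e ≠ 0 :=
  (sub_pos.2 (zpow_lt_one₀ hq0 hq1 he)).ne'

lemma two_mul_choose_two_add_self (n : ℕ) : 2 * n.choose 2 + n = n * n := by
  induction n with
  | zero => rfl
  | succ n ih => rw [Nat.choose_succ_succ', Nat.choose_one_right]; linarith

lemma mul_add_three_div_two (n : ℕ) : n * (n + 3) / 2 = n.choose 2 + 2 * n := by
  rw [show n * (n + 3) = 2 * (n.choose 2 + 2 * n) by linarith [two_mul_choose_two_add_self n]]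
  exact Nat.mul_div_cancel_left _ two_pos

lemma sum_fin_val_eq_choose_two (n : ℕ) : ∑ j : Fin n, (j : ℕ) = n.choose 2 := by
  rw [Fin.sum_univ_eq_sum_range (fun j ↦ j), sum_range_id, Nat.choose_two_right]

section ShiftedPart

variable {n : ℕ} (μ : Fin n → ℕ)

/-- With `0`-based `j`, these are the parts `μ_j + n + 1 - j` of `μ + (n, n - 1, …, 1)`. -/
def shiftedPart (j : Fin n) : ℤ := μ j + n - j

variable {μ} in
lemma strictAnti_shiftedPart (hμ : Antitone μ) : StrictAnti (shiftedPart μ) := fun i j hij ↦ by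
  have := hμ hij.le
  have : (i : ℕ) < j := hij
  simp only [shiftedPart]
  omega

lemma sum_shiftedPart : ∑ j, shiftedPart μ j = ((∑ t, μ t : ℕ) : ℤ) + n.choose 2 + n := by
  have hsum : ∑ j : Fin n, (j : ℤ) = n.choose 2 := by
    rw [← sum_fin_val_eq_choose_two]
    push_cast
    rfl
  have hsq : (n : ℤ) * n = 2 * n.choose 2 + n := by
    exact_mod_cast (two_mul_choose_two_add_self n).symm
  simp only [shiftedPart, sum_sub_distrib, sum_add_distrib, sum_const, card_univ,
    Fintype.card_fin, nsmul_eq_mul, hsum]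
  push_cast
  linear_combination hsq

lemma shiftedPart_le_sum_add (j : Fin n) : shiftedPart μ j ≤ ((∑ t, μ t : ℕ) : ℤ) + n := by
  have : μ j ≤ ∑ t, μ t := single_le_sum (fun _ _ ↦ Nat.zero_le _) (mem_univ j)
  simp only [shiftedPart]
  omega

end ShiftedPart

theorem stmt18_general (q : ℝ) (hq0 : 0 < q) (hq1 : q < 1) (n k : ℕ) (hk : 1 ≤ k)
    (μ : Fin n → ℕ) (hμ : Antitone μ) :
    (∏ j : Fin n,
        (1 - q ^ (((∑ t, μ t : ℕ) : ℤ) + (μ j : ℤ) + (k : ℤ)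
            + ((n * (n + 3) / 2 : ℕ) : ℤ) - (((j : ℕ) : ℤ) + 1) + 1))
          / (1 - q ^ (((∑ t, μ t : ℕ) : ℤ) - (μ j : ℤ) + (k : ℤ)
              + ((n.choose 2 : ℕ) : ℤ) + (((j : ℕ) : ℤ) + 1) - 1)))
      = (1 - q ^ (2 * (∑ t, μ t) + 2 * (n + 1).choose 2 + k)) / (1 - q ^ k)
        - q ^ (-((n.choose 2 : ℕ) : ℤ) - ((∑ t, μ t : ℕ) : ℤ))
            * ((1 + q ^ ((∑ t, μ t) + (n + 1).choose 2 + k)) / (1 - q ^ k))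
            * ∑ ℓ : Fin n,
                q ^ ((μ ℓ : ℤ) - (((ℓ : ℕ) : ℤ) + 1) + 1)
                  * ((1 - q ^ (((n.choose 2 : ℕ) : ℤ) + ((∑ t, μ t : ℕ) : ℤ)
                        - (μ ℓ : ℤ) + (((ℓ : ℕ) : ℤ) + 1) - 1))
                    / (1 - q ^ (((n.choose 2 : ℕ) : ℤ) + ((∑ t, μ t : ℕ) : ℤ)
                        - (μ ℓ : ℤ) + (((ℓ : ℕ) : ℤ) + 1) + (k : ℤ) - 1)))
                  * (1 - q ^ ((n : ℤ) + 1 - (((ℓ : ℕ) : ℤ) + 1) + (μ ℓ : ℤ)))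
                  * ∏ j ∈ Finset.univ.erase ℓ,
                      (1 - q ^ (2 * (n : ℤ) + 2 - (((j : ℕ) : ℤ) + 1)
                          - (((ℓ : ℕ) : ℤ) + 1) + (μ j : ℤ) + (μ ℓ : ℤ)))
                        / (1 - q ^ ((μ ℓ : ℤ) - (μ j : ℤ)
                            + ((j : ℕ) : ℤ) - ((ℓ : ℕ) : ℤ))) := by
  have hq : q ≠ 0 := hq0.ne'
  have key := prod_one_sub_mul_div_one_sub_div_mul (s := univ) (X := q ^ k)
    (z := fun j ↦ q ^ shiftedPart μ j) (F := q ^ (((∑ t, μ t : ℕ) : ℤ) + n.choose 2 + n))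
    (fun _ _ ↦ zpow_ne_zero _ hq)
    ((zpow_right_injective₀ hq0 hq1.ne).comp (strictAnti_shiftedPart hμ).injective).injOn
    (fun _ _ ↦ by positivity) (by rw [prod_zpow_eq_zpow_sum hq, sum_shiftedPart])
    (by exact_mod_cast one_sub_zpow_ne_zero hq0 hq1 (e := k) (by omega))
    (fun i _ ↦ by
      rw [← zpow_natCast, ← zpow_sub₀ hq, ← zpow_add₀ hq]
      exact one_sub_zpow_ne_zero hq0 hq1 (by have := shiftedPart_le_sum_add μ i; omega))
  rw [mul_right_comm (q ^ (-((n.choose 2 : ℕ) : ℤ) - ((∑ t, μ t : ℕ) : ℤ))),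
    mul_sum _ _ (q ^ _), mul_comm _ ((1 + _) / _)]
  simp only [← mul_assoc]
  -- what is left identifies each power of `q` in the statement with a monomial in the
  -- `z_j = q ^ shiftedPart μ j`, `F` and `X = q ^ k` of `key`
  convert key using 7
  all_goals
    simp only [shiftedPart, mul_add_three_div_two, Nat.choose_succ_succ', Nat.choose_one_right,
      ← zpow_natCast, ← zpow_mul, ← zpow_sub₀ hq, ← zpow_add₀ hq]
    push_cast
    ring_nf

theorem stmt18 (q : ℝ) (hq0 : 0 < q) (hq1 : q < 1) (n k : ℕ) (hn : 1 ≤ n) (hk : 1 ≤ k)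
    (μ : Fin n → ℕ) (hμ : Antitone μ) :
    (∏ j : Fin n,
        (1 - q ^ (((∑ t, μ t : ℕ) : ℤ) + (μ j : ℤ) + (k : ℤ)
            + ((n * (n + 3) / 2 : ℕ) : ℤ) - (((j : ℕ) : ℤ) + 1) + 1))
          / (1 - q ^ (((∑ t, μ t : ℕ) : ℤ) - (μ j : ℤ) + (k : ℤ)
              + ((n.choose 2 : ℕ) : ℤ) + (((j : ℕ) : ℤ) + 1) - 1)))
      = (1 - q ^ (2 * (∑ t, μ t) + 2 * (n + 1).choose 2 + k)) / (1 - q ^ k)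
        - q ^ (-((n.choose 2 : ℕ) : ℤ) - ((∑ t, μ t : ℕ) : ℤ))
            * ((1 + q ^ ((∑ t, μ t) + (n + 1).choose 2 + k)) / (1 - q ^ k))
            * ∑ ℓ : Fin n,
                q ^ ((μ ℓ : ℤ) - (((ℓ : ℕ) : ℤ) + 1) + 1)
                  * ((1 - q ^ (((n.choose 2 : ℕ) : ℤ) + ((∑ t, μ t : ℕ) : ℤ)
                        - (μ ℓ : ℤ) + (((ℓ : ℕ) : ℤ) + 1) - 1))
                    / (1 - q ^ (((n.choose 2 : ℕ) : ℤ) + ((∑ t, μ t : ℕ) : ℤ)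
                        - (μ ℓ : ℤ) + (((ℓ : ℕ) : ℤ) + 1) + (k : ℤ) - 1)))
                  * (1 - q ^ ((n : ℤ) + 1 - (((ℓ : ℕ) : ℤ) + 1) + (μ ℓ : ℤ)))
                  * ∏ j ∈ Finset.univ.erase ℓ,
                      (1 - q ^ (2 * (n : ℤ) + 2 - (((j : ℕ) : ℤ) + 1)
                          - (((ℓ : ℕ) : ℤ) + 1) + (μ j : ℤ) + (μ ℓ : ℤ)))
                        / (1 - q ^ ((μ ℓ : ℤ) - (μ j : ℤ)
                            + ((j : ℕ) : ℤ) - ((ℓ : ℕ) : ℤ))) :=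
  stmt18_general q hq0 hq1 n k hk μ hμ
end
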